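/- arXiv:2304.09023 — 5 statements merged into one kernel-verified Lean document; each statement's English description precedes it below -/
import Mathlib

section
/- Let N be a positive integer, let P, H₀, H₁ be Hermitian complex N×N matrices with [P,H₀] = 0, let κ > 0 be real, and let ρ : ℝ → (complex N×N matrices) be differentiable such that ρ(t) is Hermitian for every t and ρ'(t) = −i·((H₀ + u(t)·H₁)·ρ(t) − ρ(t)·(H₀ + u(t)·H₁)), where u(t) := κ·Re(i·Tr([P,H₁]ρ(t))). Then for every t, the real-valued function t ↦ Re(Tr(P·ρ(t))) is differentiable with derivative −κ·(Re(i·Tr([P,H₁]ρ(t))))², and in particular t ↦ Re(Tr(P·ρ(t))) is nonincreasing. -/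
attribute [local instance] Matrix.normedAddCommGroup Matrix.normedSpace

theorem stmt_2 (N : ℕ) (hN : 0 < N) (P H₀ H₁ : Matrix (Fin N) (Fin N) ℂ)
    (hP : P.IsHermitian) (hH₀ : H₀.IsHermitian) (hH₁ : H₁.IsHermitian)
    (hPH₀ : P * H₀ - H₀ * P = 0) (κ : ℝ) (hκ : 0 < κ)
    (ρ : ℝ → Matrix (Fin N) (Fin N) ℂ) (hherm : ∀ t : ℝ, (ρ t).IsHermitian)
    (u : ℝ → ℝ)
    (hu : ∀ t : ℝ, u t = κ * (Complex.I * ((P * H₁ - H₁ * P) * ρ t).trace).re)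
    (hρ : ∀ t : ℝ, HasDerivAt ρ
      ((-Complex.I) • ((H₀ + (u t : ℂ) • H₁) * ρ t - ρ t * (H₀ + (u t : ℂ) • H₁))) t) :
    (∀ t : ℝ, HasDerivAt (fun t => ((P * ρ t).trace).re)
      (-κ * ((Complex.I * ((P * H₁ - H₁ * P) * ρ t).trace).re) ^ 2) t) ∧
    Antitone (fun t => ((P * ρ t).trace).re) := by
  have key : ∀ t : ℝ, HasDerivAt (fun t => ((P * ρ t).trace).re)
      (-κ * ((Complex.I * ((P * H₁ - H₁ * P) * ρ t).trace).re) ^ 2) t := by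
    intro t
    set D : Matrix (Fin N) (Fin N) ℂ :=
      (-Complex.I) • ((H₀ + (u t : ℂ) • H₁) * ρ t - ρ t * (H₀ + (u t : ℂ) • H₁)) with hD
    set L : Matrix (Fin N) (Fin N) ℂ →ₗ[ℂ] ℂ :=
      (Matrix.traceLinearMap (Fin N) ℂ ℂ).comp (LinearMap.mulLeft ℂ P) with hLdef
    have hL : HasDerivAt (fun t => (P * ρ t).trace) ((P * D).trace) t := by
      have := ((LinearMap.toContinuousLinearMap L).restrictScalars ℝ).hasFDerivAt.comp_hasDerivAt
        t (hρ t)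
      exact this
    have hRe : HasDerivAt (fun t => ((P * ρ t).trace).re) ((P * D).trace).re t :=
      Complex.reCLM.hasFDerivAt.comp_hasDerivAt t hL
    have hPH₀' : P * H₀ = H₀ * P := by linear_combination (norm := noncomm_ring) hPH₀
    set z : ℂ := ((P * H₁ - H₁ * P) * ρ t).trace with hz
    have key : (P * D).trace = (-Complex.I) * (u t : ℂ) * z := by
      have c1 : (P * (ρ t * H₀)).trace = (H₀ * P * ρ t).trace := by
        rw [← Matrix.mul_assoc, Matrix.trace_mul_cycle]
      have c2 : (P * (ρ t * H₁)).trace = (H₁ * P * ρ t).trace := by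
        rw [← Matrix.mul_assoc, Matrix.trace_mul_cycle]
      simp only [hD, hz, Matrix.mul_smul, Matrix.smul_mul, Matrix.mul_sub, Matrix.sub_mul,
        Matrix.mul_add, Matrix.add_mul, Matrix.trace_smul, Matrix.trace_sub, Matrix.trace_add,
        Matrix.mul_assoc, smul_eq_mul] at *
      rw [c1, c2]
      rw [show P * (H₀ * ρ t) = H₀ * (P * ρ t) by rw [← Matrix.mul_assoc, ← Matrix.mul_assoc, hPH₀']]
      ring
    rw [key] at hRe
    convert hRe using 1
    have hut := hu t
    have : ((-Complex.I) * (u t : ℂ) * z).re = -(u t) * (Complex.I * z).re := by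
      simp [Complex.mul_re, Complex.mul_im]
    rw [this, hut]
    ring
  refine ⟨key, ?_⟩
  have hdiff : Differentiable ℝ (fun t => ((P * ρ t).trace).re) :=
    fun t => (key t).differentiableAt
  apply antitone_of_deriv_nonpos hdiff
  intro t
  rw [(key t).deriv]
  have : 0 ≤ κ * ((Complex.I * ((P * H₁ - H₁ * P) * ρ t).trace).re) ^ 2 :=
    mul_nonneg hκ.le (sq_nonneg _)
  linarith
end

section
/- Let N be a positive integer, let p, h : Fin N → ℝ and let H₁ and ρ̄ be complex N×N matrices. Assume: (1) p is injective (non-degenerate spectrum of P); (2) the map sending each ordered pair (i,j) with i ≠ j to the complex number e^{i(h_j − h_i)} is injective on such pairs (the eigenvalue gaps of H₀ are distinct modulo 2π); (3) (H₁)_{j,i} ≠ 0 for all i ≠ j (H₁ is fully connected). If for every natural number k one has Σ_{i,j} (p_j − p_i) · e^{i(h_j − h_i)k} · ρ̄_{i,j} · (H₁)_{j,i} = 0, then ρ̄_{i,j} = 0 for all i ≠ j, i.e., ρ̄ is diagonal. -/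
/-!
Over the off-diagonal pairs `x = (i, j)`, the hypothesis says that the power sums
`∑ₓ cₓ λₓ ^ k` vanish for all `k`, where `λₓ = exp (I (h j - h i))` are pairwise distinct and
`cₓ = (p j - p i) ρ i j H₁ j i`. Invertibility of the Vandermonde matrix of the `λₓ` forces every
`cₓ = 0`, and the first and last factors of `cₓ` are nonzero.
-/

open Finset

theorem Finset.eq_zero_of_forall_sum_mul_pow_eq_zero {ι R : Type*} [CommRing R] [IsDomain R]
    {s : Finset ι} {f v : ι → R} (hf : Set.InjOn f s)
    (hfv : ∀ k : ℕ, ∑ j ∈ s, v j * f j ^ k = 0) : ∀ j ∈ s, v j = 0 := by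
  intro j hj
  let e := s.equivFin.symm
  have hzero := Matrix.eq_zero_of_forall_pow_sum_mul_pow_eq_zero
    (f := fun i => f (e i)) (v := fun i => v (e i))
    (fun a b hab => e.injective (Subtype.ext (hf (e a).2 (e b).2 hab)))
    (fun k => by rw [← hfv k, ← s.sum_coe_sort]; exact e.sum_comp (fun j => v j * f j ^ (k : ℕ)))
  simpa [e] using congrFun hzero (s.equivFin ⟨j, hj⟩)

theorem Finset.sum_sum_eq_sum_offDiag {ι M : Type*} [Fintype ι] [AddCommMonoid M]
    (g : ι → ι → M) (hg : ∀ i, g i i = 0) :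
    ∑ i, ∑ j, g i j = ∑ x ∈ univ.offDiag, g x.1 x.2 := by
  rw [← sum_product']
  refine (sum_subset (fun x _ => by simp) fun x _ hx => ?_).symm
  obtain ⟨i, j⟩ := x
  obtain rfl : i = j := by simpa using hx
  exact hg i

theorem stmt_7_general (N : ℕ) (p h : Fin N → ℝ)
    (H₁ ρ : Matrix (Fin N) (Fin N) ℂ)
    (hp : Function.Injective p)
    (hgaps : ∀ i j k l : Fin N, i ≠ j → k ≠ l →
      Complex.exp (Complex.I * ((h j : ℂ) - (h i : ℂ))) =
        Complex.exp (Complex.I * ((h l : ℂ) - (h k : ℂ))) → (i, j) = (k, l))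
    (hH₁ : ∀ i j : Fin N, i ≠ j → H₁ j i ≠ 0)
    (hsum : ∀ k : ℕ, ∑ i : Fin N, ∑ j : Fin N,
        ((p j : ℂ) - (p i : ℂ)) *
          Complex.exp (Complex.I * ((h j : ℂ) - (h i : ℂ)) * (k : ℂ)) *
          ρ i j * H₁ j i = 0) :
    ∀ i j : Fin N, i ≠ j → ρ i j = 0 := by
  intro i j hij
  have hinj : Set.InjOn (fun x : Fin N × Fin N => Complex.exp (Complex.I * (h x.2 - h x.1)))
      (univ.offDiag : Finset (Fin N × Fin N)) := fun x hx y hy hxy =>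
    hgaps x.1 x.2 y.1 y.2 (mem_offDiag.mp hx).2.2 (mem_offDiag.mp hy).2.2 hxy
  have hpow : ∀ k : ℕ, ∑ x ∈ univ.offDiag,
      ((p x.2 : ℂ) - p x.1) * ρ x.1 x.2 * H₁ x.2 x.1 *
        Complex.exp (Complex.I * (h x.2 - h x.1)) ^ k = 0 := by
    intro k
    rw [← hsum k, sum_sum_eq_sum_offDiag _ fun i => by simp]
    refine sum_congr rfl fun x _ => ?_
    rw [← Complex.exp_nat_mul]
    ring_nf
  have hcoeff := eq_zero_of_forall_sum_mul_pow_eq_zero hinj hpow (i, j) (by simpa using hij)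
  have hpij : (p j : ℂ) - p i ≠ 0 :=
    sub_ne_zero.mpr (Complex.ofReal_injective.ne (hp.ne (Ne.symm hij)))
  simpa [hpij, hH₁ i j hij] using hcoeff

theorem stmt_7 (N : ℕ) (hN : 0 < N) (p h : Fin N → ℝ)
    (H₁ ρ : Matrix (Fin N) (Fin N) ℂ)
    (hp : Function.Injective p)
    (hgaps : ∀ i j k l : Fin N, i ≠ j → k ≠ l →
      Complex.exp (Complex.I * ((h j : ℂ) - (h i : ℂ))) =
        Complex.exp (Complex.I * ((h l : ℂ) - (h k : ℂ))) → (i, j) = (k, l))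
    (hH₁ : ∀ i j : Fin N, i ≠ j → H₁ j i ≠ 0)
    (hsum : ∀ k : ℕ, ∑ i : Fin N, ∑ j : Fin N,
        ((p j : ℂ) - (p i : ℂ)) *
          Complex.exp (Complex.I * ((h j : ℂ) - (h i : ℂ)) * (k : ℂ)) *
          ρ i j * H₁ j i = 0) :
    ∀ i j : Fin N, i ≠ j → ρ i j = 0 :=
  stmt_7_general N p h H₁ ρ hp hgaps hH₁ hsum
end

section
/- Let N and m be positive integers, let c : Fin m → Fin N → ℂ, for each μ let M_μ = diag(c_{μ,0},…,c_{μ,N−1}) be the corresponding diagonal complex N×N matrix, and assume Σ_μ M_μᴴ·M_μ = I. Let ρ be a density matrix, and for each μ let p_μ := Re(Tr(M_μᴴ·M_μ·ρ)). Then Σ_{μ : p_μ ≠ 0} p_μ · Σ_n ( Re( (M_μ·ρ·M_μᴴ)_{n,n} ) / p_μ )² ≥ Σ_n ( Re(ρ_{n,n}) )². -/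
open ComplexOrder

open Matrix

theorem stmt_11 (N m : ℕ) (hN : 0 < N) (hm : 0 < m) (c : Fin m → Fin N → ℂ)
    (hcomp : ∑ μ : Fin m, (Matrix.diagonal (c μ))ᴴ * Matrix.diagonal (c μ) = 1)
    (ρ : Matrix (Fin N) (Fin N) ℂ) (hρ : ρ.PosSemidef) (htr : ρ.trace = 1)
    (p : Fin m → ℝ)
    (hp : ∀ μ : Fin m,
      p μ = (((Matrix.diagonal (c μ))ᴴ * Matrix.diagonal (c μ) * ρ).trace).re) :
    ∑ μ ∈ Finset.univ.filter (fun μ => p μ ≠ 0),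
        p μ * ∑ n : Fin N,
          (((Matrix.diagonal (c μ) * ρ * (Matrix.diagonal (c μ))ᴴ) n n).re / p μ) ^ 2
      ≥ ∑ n : Fin N, ((ρ n n).re) ^ 2 := by
  classical
  set d : Fin N → ℝ := fun n => (ρ n n).re with hd
  set a : Fin m → Fin N → ℝ := fun μ n => Complex.normSq (c μ n) with ha
  set s : Finset (Fin m) := Finset.univ.filter (fun μ => p μ ≠ 0) with hs
  -- diagonal entries of ρ are nonnegative
  have hdnn : ∀ n, 0 ≤ d n := by
    intro n
    have := hρ.re_dotProduct_nonneg (Pi.single n 1)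
    simpa [dotProduct, Matrix.mulVec, Pi.single_apply, mul_ite, ite_mul] using this
  -- completeness entrywise
  have h1 : ∀ n, ∑ μ, a μ n = 1 := by
    intro n
    have h := congrFun (congrFun hcomp n) n
    rw [Matrix.sum_apply] at h
    have h2 : ∑ μ, ((Matrix.diagonal (c μ))ᴴ * Matrix.diagonal (c μ)) n n
        = ∑ μ, (starRingEnd ℂ (c μ n) * c μ n) := by
      apply Finset.sum_congr rfl
      intro μ _
      simp [Matrix.mul_apply, Matrix.diagonal_apply, Matrix.conjTranspose_apply, ite_mul, mul_ite]
    rw [h2, Matrix.one_apply_eq] at h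
    have h3 : ∑ μ, (starRingEnd ℂ (c μ n) * c μ n) = ((∑ μ, a μ n : ℝ) : ℂ) := by
      push_cast
      apply Finset.sum_congr rfl
      intro μ _
      rw [ha]
      simp [Complex.normSq_eq_conj_mul_self]
    rw [h3] at h
    exact_mod_cast h
  -- formula for p
  have hpa : ∀ μ, p μ = ∑ n, a μ n * d n := by
    intro μ
    rw [hp μ]
    have htrμ : ((Matrix.diagonal (c μ))ᴴ * Matrix.diagonal (c μ) * ρ).trace
        = ∑ n, ((a μ n : ℂ) * ρ n n) := by
      simp only [Matrix.trace, Matrix.diag]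
      apply Finset.sum_congr rfl
      intro n _
      have : ((Matrix.diagonal (c μ))ᴴ * Matrix.diagonal (c μ) * ρ) n n
          = (starRingEnd ℂ (c μ n) * c μ n) * ρ n n := by
        simp [Matrix.mul_apply, Matrix.diagonal_apply, Matrix.conjTranspose_apply,
          ite_mul, mul_ite, Finset.sum_ite_eq]
      rw [this]
      congr 1
      rw [ha]
      simp [Complex.normSq_eq_conj_mul_self]
    rw [htrμ, Complex.re_sum]
    apply Finset.sum_congr rfl
    intro n _
    rw [Complex.re_ofReal_mul]
  -- formula for diagonal entries of MρMᴴ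
  have hM : ∀ μ n, ((Matrix.diagonal (c μ) * ρ * (Matrix.diagonal (c μ))ᴴ) n n).re
      = a μ n * d n := by
    intro μ n
    have : (Matrix.diagonal (c μ) * ρ * (Matrix.diagonal (c μ))ᴴ) n n
        = c μ n * ρ n n * star (c μ n) := by
      simp [Matrix.mul_apply, Matrix.diagonal_apply, Matrix.conjTranspose_apply, ite_mul, mul_ite]
    rw [this]
    have : c μ n * ρ n n * star (c μ n) = ((a μ n : ℝ) : ℂ) * ρ n n := by
      rw [ha]
      simp [Complex.normSq_eq_conj_mul_self]
      ring
    rw [this, Complex.re_ofReal_mul]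
  have hann : ∀ μ n, 0 ≤ a μ n := fun μ n => Complex.normSq_nonneg _
  have hpnn : ∀ μ, 0 ≤ p μ := by
    intro μ
    rw [hpa μ]
    exact Finset.sum_nonneg fun n _ => mul_nonneg (hann μ n) (hdnn n)
  -- if p μ = 0 then each term a μ n * d n = 0
  have hzero : ∀ μ, p μ = 0 → ∀ n, a μ n * d n = 0 := by
    intro μ hμ n
    have := (Finset.sum_eq_zero_iff_of_nonneg
      (fun n _ => mul_nonneg (hann μ n) (hdnn n))).1 ((hpa μ).symm.trans hμ)
    exact this n (Finset.mem_univ n)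
  -- d n = sum over s of a μ n * d n
  have hds : ∀ n, ∑ μ ∈ s, a μ n * d n = d n := by
    intro n
    have hfull : ∑ μ, a μ n * d n = d n := by
      rw [← Finset.sum_mul, h1 n, one_mul]
    have hsub : ∑ μ ∈ s, a μ n * d n = ∑ μ, a μ n * d n := by
      apply Finset.sum_subset (Finset.subset_univ s)
      intro μ _ hμ
      have : p μ = 0 := by
        by_contra hne
        exact hμ (Finset.mem_filter.2 ⟨Finset.mem_univ μ, hne⟩)
      exact hzero μ this n
    rw [hsub, hfull]
  -- sum of p over s is at most 1
  have hsum1 : ∑ μ, p μ = 1 := by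
    have : ∑ μ, p μ = ∑ n, d n := by
      simp_rw [hpa]
      rw [Finset.sum_comm]
      apply Finset.sum_congr rfl
      intro n _
      rw [← Finset.sum_mul, h1 n, one_mul]
    rw [this]
    have : (∑ n, d n) = (ρ.trace).re := by
      rw [Matrix.trace, Complex.re_sum]
      rfl
    rw [this, htr]
    rfl
  have hps1 : ∑ μ ∈ s, p μ ≤ 1 := by
    rw [← hsum1]
    exact Finset.sum_le_sum_of_subset_of_nonneg (Finset.subset_univ s)
      (fun μ _ _ => hpnn μ)
  have hppos : ∀ μ ∈ s, 0 < p μ := by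
    intro μ hμ
    exact lt_of_le_of_ne (hpnn μ) (Ne.symm (Finset.mem_filter.1 hμ).2)
  -- rewrite LHS
  have hLHS : ∑ μ ∈ s, p μ * ∑ n, (((Matrix.diagonal (c μ) * ρ * (Matrix.diagonal (c μ))ᴴ) n n).re / p μ) ^ 2
      = ∑ n, ∑ μ ∈ s, (a μ n * d n) ^ 2 / p μ := by
    rw [Finset.sum_comm]
    apply Finset.sum_congr rfl
    intro μ hμ
    have hpne : p μ ≠ 0 := (hppos μ hμ).ne'
    rw [Finset.mul_sum]
    apply Finset.sum_congr rfl
    intro n _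
    rw [hM μ n, div_pow]
    field_simp
  rw [hLHS]
  apply Finset.sum_le_sum
  intro n _
  -- per-n Cauchy-Schwarz (Engel form)
  by_cases hse : s = ∅
  · have hdz : d n = 0 := by rw [← hds n, hse, Finset.sum_empty]
    have h0 : (ρ n n).re = 0 := hdz
    simp [hse, h0]
  · have hsne : s.Nonempty := Finset.nonempty_of_ne_empty hse
    have hT : 0 < ∑ μ ∈ s, p μ :=
      Finset.sum_pos (fun μ hμ => hppos μ hμ) hsne
    have key := Finset.sq_sum_div_le_sum_sq_div s (fun μ => a μ n * d n) hppos
    rw [hds n] at key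
    calc d n ^ 2 ≤ d n ^ 2 / ∑ μ ∈ s, p μ := by
          rw [le_div_iff₀ hT]
          nlinarith [sq_nonneg (d n)]
      _ ≤ ∑ μ ∈ s, (a μ n * d n) ^ 2 / p μ := key
end

section
/- Let N and m be positive integers, let p : Fin N → ℝ and P = diag(p₀,…,p_{N−1}), let c : Fin m → Fin N → ℂ, for each μ let M_μ = diag(c_{μ,0},…,c_{μ,N−1}), and assume Σ_μ M_μᴴ·M_μ = I. Let ε ≥ 0 be real and define V_ε(σ) := Re(Tr(P·σ)) − (ε/2)·Σ_n (Re(σ_{n,n}))² for complex N×N matrices σ. Then for every density matrix ρ, with p_μ := Re(Tr(M_μᴴ·M_μ·ρ)), one has Σ_{μ : p_μ ≠ 0} p_μ · V_ε( (M_μ·ρ·M_μᴴ) / p_μ ) ≤ V_ε(ρ). -/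
open ComplexOrder

open Matrix

theorem stmt_12 (N m : ℕ) (hN : 0 < N) (hm : 0 < m)
    (p : Fin N → ℝ) (P : Matrix (Fin N) (Fin N) ℂ)
    (hP : P = Matrix.diagonal (fun n => (p n : ℂ)))
    (c : Fin m → Fin N → ℂ)
    (hcomp : ∑ μ : Fin m, (Matrix.diagonal (c μ))ᴴ * Matrix.diagonal (c μ) = 1)
    (ε : ℝ) (hε : 0 ≤ ε)
    (V : Matrix (Fin N) (Fin N) ℂ → ℝ)
    (hV : ∀ σ : Matrix (Fin N) (Fin N) ℂ,
      V σ = ((P * σ).trace).re - ε / 2 * ∑ n : Fin N, ((σ n n).re) ^ 2)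
    (ρ : Matrix (Fin N) (Fin N) ℂ) (hρ : ρ.PosSemidef) (htr : ρ.trace = 1)
    (q : Fin m → ℝ)
    (hq : ∀ μ : Fin m,
      q μ = (((Matrix.diagonal (c μ))ᴴ * Matrix.diagonal (c μ) * ρ).trace).re) :
    ∑ μ ∈ Finset.univ.filter (fun μ => q μ ≠ 0),
        q μ * V ((q μ)⁻¹ • (Matrix.diagonal (c μ) * ρ * (Matrix.diagonal (c μ))ᴴ))
      ≤ V ρ := by
  classical
  set a : Fin m → Fin N → ℝ := fun μ n => Complex.normSq (c μ n) with ha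
  set r : Fin N → ℝ := fun n => (ρ n n).re with hrdef
  have ha0 : ∀ μ n, 0 ≤ a μ n := fun μ n => Complex.normSq_nonneg _
  have hMHM : ∀ μ, (Matrix.diagonal (c μ))ᴴ * Matrix.diagonal (c μ)
      = Matrix.diagonal (fun n => (a μ n : ℂ)) := by
    intro μ
    rw [Matrix.diagonal_conjTranspose, Matrix.diagonal_mul_diagonal]
    congr 1
    funext n
    simp [ha, Complex.normSq_eq_conj_mul_self, Complex.star_def]
  -- column sums of a are 1
  have h1 : ∀ n, ∑ μ, a μ n = 1 := by
    intro n
    have := congrFun (congrFun hcomp n) n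
    simp only [hMHM] at this
    rw [Matrix.sum_apply] at this
    simp only [Matrix.diagonal_apply_eq, Matrix.one_apply_eq] at this
    exact_mod_cast this
  -- diagonal entries of ρ nonneg
  have hr0 : ∀ n, 0 ≤ r n := by
    intro n
    have := hρ.re_dotProduct_nonneg (Pi.single n 1)
    simpa [dotProduct, Matrix.mulVec, Pi.single_apply, Finset.mul_sum,
      hrdef] using this
  -- trace of ρ
  have hr1 : ∑ n, r n = 1 := by
    have : (ρ.trace).re = 1 := by rw [htr]; simp
    rw [Matrix.trace, Complex.re_sum] at this
    simpa [Matrix.diag, hrdef] using this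
  -- q in real terms
  have hq' : ∀ μ, q μ = ∑ n, a μ n * r n := by
    intro μ
    rw [hq μ, hMHM, Matrix.trace, Complex.re_sum]
    congr 1
    funext n
    rw [Matrix.diag_apply, Matrix.diagonal_mul, Complex.re_ofReal_mul]
  have hq0 : ∀ μ, 0 ≤ q μ := fun μ => by
    rw [hq' μ]; exact Finset.sum_nonneg fun n _ => mul_nonneg (ha0 μ n) (hr0 n)
  have hzero : ∀ μ, q μ = 0 → ∀ n, a μ n * r n = 0 := by
    intro μ hμ n
    have := (Finset.sum_eq_zero_iff_of_nonneg
      (fun n _ => mul_nonneg (ha0 μ n) (hr0 n))).mp ((hq' μ).symm.trans hμ)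
    exact this n (Finset.mem_univ n)
  -- diagonal entries of MρMᴴ
  have hXdiag : ∀ μ n, ((Matrix.diagonal (c μ)) * ρ * (Matrix.diagonal (c μ))ᴴ) n n
      = (a μ n : ℂ) * ρ n n := by
    intro μ n
    rw [Matrix.diagonal_conjTranspose, Matrix.mul_diagonal, Matrix.diagonal_mul]
    have : (starRingEnd ℂ) (c μ n) * c μ n = (a μ n : ℂ) :=
      (Complex.normSq_eq_conj_mul_self).symm
    rw [Pi.star_apply, Complex.star_def]
    ring_nf
    rw [mul_comm (c μ n), mul_assoc, ← this]
    ring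
  -- trace of P * σ
  have htrP : ∀ σ : Matrix (Fin N) (Fin N) ℂ,
      ((P * σ).trace).re = ∑ n, p n * (σ n n).re := by
    intro σ
    rw [hP, Matrix.trace, Complex.re_sum]
    congr 1
    funext n
    rw [Matrix.diag_apply, Matrix.diagonal_mul, Complex.re_ofReal_mul]
  -- V ρ in real terms
  have hVρ : V ρ = ∑ n, p n * r n - ε / 2 * ∑ n, r n ^ 2 := by
    rw [hV ρ, htrP ρ]
  -- value of each summand
  have hterm : ∀ μ, q μ ≠ 0 →
      q μ * V ((q μ)⁻¹ • (Matrix.diagonal (c μ) * ρ * (Matrix.diagonal (c μ))ᴴ))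
        = (∑ n, p n * (a μ n * r n)) - ε / 2 * ((q μ)⁻¹ * ∑ n, (a μ n * r n) ^ 2) := by
    intro μ hμ
    have hd : ∀ n, (((q μ)⁻¹ • (Matrix.diagonal (c μ) * ρ * (Matrix.diagonal (c μ))ᴴ)) n n).re
        = (q μ)⁻¹ * (a μ n * r n) := by
      intro n
      rw [Matrix.smul_apply, hXdiag μ n, Complex.real_smul, Complex.re_ofReal_mul,
        Complex.re_ofReal_mul]
    rw [hV, htrP]
    simp only [hd]
    have hsum1 : ∑ n, p n * ((q μ)⁻¹ * (a μ n * r n))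
        = (q μ)⁻¹ * ∑ n, p n * (a μ n * r n) := by
      rw [Finset.mul_sum]; congr 1; funext n; ring
    have hsum2 : ∑ n, ((q μ)⁻¹ * (a μ n * r n)) ^ 2
        = (q μ)⁻¹ ^ 2 * ∑ n, (a μ n * r n) ^ 2 := by
      rw [Finset.mul_sum]; congr 1; funext n; ring
    rw [hsum1, hsum2]
    field_simp
  set S := Finset.univ.filter (fun μ => q μ ≠ 0) with hS
  have hqpos : ∀ μ ∈ S, 0 < q μ := by
    intro μ hμ
    rw [hS, Finset.mem_filter] at hμ
    exact lt_of_le_of_ne (hq0 μ) (Ne.symm hμ.2)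
  -- sum of A over S equals ∑ p r
  have hA : ∑ μ ∈ S, (∑ n, p n * (a μ n * r n)) = ∑ n, p n * r n := by
    rw [hS, Finset.sum_filter_of_ne]
    · rw [Finset.sum_comm]
      congr 1
      funext n
      rw [← Finset.mul_sum, ← Finset.sum_mul, h1 n, one_mul]
    · intro μ _ hne
      by_contra hq0'
      apply hne
      rw [Finset.sum_eq_zero]
      intro n _
      rw [hzero μ hq0' n, mul_zero]
  -- sum of q over S ≤ 1
  have hqS : ∑ μ ∈ S, q μ ≤ 1 := by
    calc ∑ μ ∈ S, q μ ≤ ∑ μ, q μ :=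
          Finset.sum_le_sum_of_subset_of_nonneg (Finset.filter_subset _ _)
            (fun μ _ _ => hq0 μ)
      _ = 1 := by
          simp only [hq']
          rw [Finset.sum_comm]
          calc ∑ n, ∑ μ, a μ n * r n = ∑ n, r n := by
                congr 1; funext n; rw [← Finset.sum_mul, h1 n, one_mul]
            _ = 1 := hr1
  -- Cauchy–Schwarz step
  have hB : ∑ n, r n ^ 2 ≤ ∑ μ ∈ S, (q μ)⁻¹ * ∑ n, (a μ n * r n) ^ 2 := by
    have key : ∀ n, r n ^ 2 ≤ ∑ μ ∈ S, (a μ n * r n) ^ 2 / q μ := by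
      intro n
      have hrn : r n = ∑ μ ∈ S, a μ n * r n := by
        rw [hS, Finset.sum_filter_of_ne, ← Finset.sum_mul, h1 n, one_mul]
        intro μ _ hne
        by_contra hq0'
        exact hne (hzero μ hq0' n)
      have cs := Finset.sum_mul_sq_le_sq_mul_sq S (fun μ => Real.sqrt (q μ))
          (fun μ => (a μ n * r n) / Real.sqrt (q μ))
      have he1 : ∀ μ ∈ S, Real.sqrt (q μ) * ((a μ n * r n) / Real.sqrt (q μ))
          = a μ n * r n := by
        intro μ hμ
        rw [mul_div_cancel₀]
        exact (Real.sqrt_pos.mpr (hqpos μ hμ)).ne'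
      have he2 : ∀ μ ∈ S, (Real.sqrt (q μ)) ^ 2 = q μ := by
        intro μ hμ; exact Real.sq_sqrt (hqpos μ hμ).le
      have he3 : ∀ μ ∈ S, ((a μ n * r n) / Real.sqrt (q μ)) ^ 2
          = (a μ n * r n) ^ 2 / q μ := by
        intro μ hμ
        rw [div_pow, Real.sq_sqrt (hqpos μ hμ).le]
      rw [Finset.sum_congr rfl he1, Finset.sum_congr rfl he2,
        Finset.sum_congr rfl he3] at cs
      calc r n ^ 2 = (∑ μ ∈ S, a μ n * r n) ^ 2 := by rw [← hrn]
        _ ≤ (∑ μ ∈ S, q μ) * ∑ μ ∈ S, (a μ n * r n) ^ 2 / q μ := cs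
        _ ≤ 1 * ∑ μ ∈ S, (a μ n * r n) ^ 2 / q μ := by
            apply mul_le_mul_of_nonneg_right hqS
            exact Finset.sum_nonneg fun μ hμ =>
              div_nonneg (sq_nonneg _) (hqpos μ hμ).le
        _ = ∑ μ ∈ S, (a μ n * r n) ^ 2 / q μ := one_mul _
    calc ∑ n, r n ^ 2 ≤ ∑ n, ∑ μ ∈ S, (a μ n * r n) ^ 2 / q μ :=
          Finset.sum_le_sum fun n _ => key n
      _ = ∑ μ ∈ S, (q μ)⁻¹ * ∑ n, (a μ n * r n) ^ 2 := by
          rw [Finset.sum_comm]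
          congr 1
          funext μ
          rw [Finset.mul_sum]
          congr 1
          funext n
          rw [div_eq_inv_mul]
  -- put it together
  have hLHS : ∑ μ ∈ S,
      q μ * V ((q μ)⁻¹ • (Matrix.diagonal (c μ) * ρ * (Matrix.diagonal (c μ))ᴴ))
      = (∑ n, p n * r n) - ε / 2 * ∑ μ ∈ S, (q μ)⁻¹ * ∑ n, (a μ n * r n) ^ 2 := by
    rw [Finset.mul_sum, ← hA, ← Finset.sum_sub_distrib]
    apply Finset.sum_congr rfl
    intro μ hμ
    rw [hS, Finset.mem_filter] at hμ
    rw [hterm μ hμ.2]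
  rw [hLHS, hVρ]
  have := mul_le_mul_of_nonneg_left hB (by positivity : (0:ℝ) ≤ ε / 2)
  linarith
end

section
/- Let N be a positive integer, let H₁ be a Hermitian complex N×N matrix, let σ : Fin N → ℝ, let P = diag(σ₀,…,σ_{N−1}), and define the real matrix R by R_{i,j} = 2·|(H₁)_{i,j}|² for i ≠ j and R_{i,i} = 2·(|(H₁)_{i,i}|² − Re((H₁·H₁)_{i,i})). Fix an index n and let E_n be the complex N×N matrix with entry 1 at position (n,n) and 0 elsewhere. Then the function g(u) = Re(Tr(P · exp(−i·u·H₁) · E_n · exp(i·u·H₁))) (u ∈ ℝ) is twice differentiable at u = 0 with g''(0) = Σ_j R_{n,j}·σ_j = (Rσ)_n. -/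
open NormedSpace Matrix

attribute [local instance] Matrix.linftyOpNormedRing Matrix.linftyOpNormedAlgebra

theorem stmt_15 (N : ℕ) (hN : 0 < N) (H₁ : Matrix (Fin N) (Fin N) ℂ)
    (hH₁ : H₁.IsHermitian) (σ : Fin N → ℝ) (P : Matrix (Fin N) (Fin N) ℂ)
    (hP : P = Matrix.diagonal (fun n => (σ n : ℂ)))
    (R : Matrix (Fin N) (Fin N) ℝ)
    (hR : ∀ i j : Fin N, R i j =
      if i = j then 2 * (‖H₁ i i‖ ^ 2 - ((H₁ * H₁) i i).re)
      else 2 * ‖H₁ i j‖ ^ 2)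
    (n : Fin N) :
    ∃ g' : ℝ → ℝ,
      (∀ u : ℝ, HasDerivAt (fun u : ℝ =>
          ((P * NormedSpace.exp ((-Complex.I * (u : ℂ)) • H₁) *
            Matrix.single n n 1 *
            NormedSpace.exp ((Complex.I * (u : ℂ)) • H₁)).trace).re) (g' u) u) ∧
      HasDerivAt g' (∑ j : Fin N, R n j * σ j) 0 := by
  classical
  set A : Matrix (Fin N) (Fin N) ℂ := (-Complex.I) • H₁ with hAdef
  set E : Matrix (Fin N) (Fin N) ℂ := Matrix.single n n 1 with hEdef
  have hsm1 : ∀ u : ℝ, (-Complex.I * (u : ℂ)) • H₁ = u • A := by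
    intro u
    rw [hAdef, mul_comm, mul_smul, Complex.coe_smul]
  have hsm2 : ∀ u : ℝ, (Complex.I * (u : ℂ)) • H₁ = u • (-A) := by
    intro u
    rw [hAdef, neg_smul, neg_neg, mul_comm, mul_smul, Complex.coe_smul]
  have hF : ∀ (B : Matrix (Fin N) (Fin N) ℂ) (u : ℝ),
      HasDerivAt (fun u : ℝ => exp (u • B)) (exp (u • B) * B) u := by
    intro B u
    exact hasDerivAt_exp_smul_const B u
  set F : ℝ → Matrix (Fin N) (Fin N) ℂ := fun u => exp (u • A) with hFdef
  set G : ℝ → Matrix (Fin N) (Fin N) ℂ := fun u => exp (u • (-A)) with hGdef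
  set L : Matrix (Fin N) (Fin N) ℂ →L[ℝ] ℝ :=
    LinearMap.toContinuousLinearMap
      (Complex.reLm.comp (Matrix.traceLinearMap (Fin N) ℝ ℂ)) with hLdef
  have hLapp : ∀ X : Matrix (Fin N) (Fin N) ℂ, L X = X.trace.re := fun X => rfl
  -- first derivative
  have hderM : ∀ u : ℝ, HasDerivAt (fun u : ℝ => ((P * F u) * E) * G u)
      (((P * (F u * A)) * E) * G u + ((P * F u) * E) * (G u * (-A))) u := by
    intro u
    exact (((hF A u).const_mul P).mul_const E).mul (hF (-A) u)
  refine ⟨fun u => L (((P * (F u * A)) * E) * G u + ((P * F u) * E) * (G u * (-A))), ?_, ?_⟩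
  · intro u
    have h := L.hasFDerivAt.comp_hasDerivAt u (hderM u)
    have hfun : (fun u : ℝ =>
        ((P * NormedSpace.exp ((-Complex.I * (u : ℂ)) • H₁) *
          Matrix.single n n 1 *
          NormedSpace.exp ((Complex.I * (u : ℂ)) • H₁)).trace).re) =
        (fun u : ℝ => L (((P * F u) * E) * G u)) := by
      funext v
      rw [hLapp, hsm1 v, hsm2 v]
    rw [hfun]
    exact h
  · -- second derivative at 0
    have hT1 : HasDerivAt (fun u : ℝ => ((P * (F u * A)) * E) * G u)
        (((P * ((F 0 * A) * A)) * E) * G 0 + ((P * (F 0 * A)) * E) * (G 0 * (-A))) 0 :=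
      ((((hF A 0).mul_const A).const_mul P).mul_const E).mul (hF (-A) 0)
    have hT2 : HasDerivAt (fun u : ℝ => ((P * F u) * E) * (G u * (-A)))
        (((P * (F 0 * A)) * E) * (G 0 * (-A)) + ((P * F 0) * E) * ((G 0 * (-A)) * (-A))) 0 :=
      ((((hF A 0).const_mul P).mul_const E)).mul ((hF (-A) 0).mul_const (-A))
    have hT := hT1.add hT2
    have h := L.hasFDerivAt.comp_hasDerivAt 0 hT
    have hval : L ((((P * ((F 0 * A) * A)) * E) * G 0 + ((P * (F 0 * A)) * E) * (G 0 * (-A))) +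
        (((P * (F 0 * A)) * E) * (G 0 * (-A)) + ((P * F 0) * E) * ((G 0 * (-A)) * (-A)))) =
        ∑ j : Fin N, R n j * σ j := by
      have hF0 : F 0 = 1 := by simp [hFdef, NormedSpace.exp_zero]
      have hG0 : G 0 = 1 := by simp [hGdef, NormedSpace.exp_zero]
      rw [hF0, hG0, one_mul, mul_one, mul_one, one_mul]
      -- now L ((P*(A*A))*E + (P*A)*E*(-A) + ((P*A)*E*(-A) + (P*E)*((-A)*(-A))))
      have htrE : ∀ X : Matrix (Fin N) (Fin N) ℂ, (X * E).trace = X n n := by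
        intro X
        simp [hEdef, Matrix.trace, Matrix.mul_apply, Matrix.single, Matrix.diag,
          Matrix.of_apply, ite_and, Finset.sum_ite_eq, Finset.sum_ite_eq']
      have htr2 : (((P * A) * E) * (-A)).trace = ((-A) * (P * A)) n n := by
        rw [Matrix.trace_mul_comm, ← Matrix.mul_assoc, htrE]
      have htr3 : ((P * E) * ((-A) * (-A))).trace = (((-A) * (-A)) * P) n n := by
        rw [Matrix.trace_mul_comm, ← Matrix.mul_assoc, htrE]
      rw [hLapp]
      rw [Matrix.trace_add, Matrix.trace_add, Matrix.trace_add, htrE, htr2, htr3]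
      have hAA : A * A = (-1 : ℂ) • (H₁ * H₁) := by
        rw [hAdef, Matrix.smul_mul, Matrix.mul_smul, smul_smul]
        norm_num [Complex.I_mul_I]
      have hnA : -A = Complex.I • H₁ := by rw [hAdef, neg_smul, neg_neg]
      have hnAnA : (-A) * (-A) = (-1 : ℂ) • (H₁ * H₁) := by
        rw [hnA, Matrix.smul_mul, Matrix.mul_smul, smul_smul, Complex.I_mul_I]
      have hmid : (-A) * (P * A) = H₁ * (P * H₁) := by
        rw [hnA, hAdef, Matrix.smul_mul, Matrix.mul_smul, Matrix.mul_smul, smul_smul]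
        norm_num [Complex.I_mul_I]
      rw [hAA, hnAnA, hmid, hP]
      -- entrywise computations
      have e1 : (Matrix.diagonal (fun k => (σ k : ℂ)) * ((-1 : ℂ) • (H₁ * H₁))) n n
          = -((σ n : ℂ) * (H₁ * H₁) n n) := by
        rw [Matrix.mul_smul]
        simp [Matrix.diagonal_mul]
      have e3 : (((-1 : ℂ) • (H₁ * H₁)) * Matrix.diagonal (fun k => (σ k : ℂ))) n n
          = -((H₁ * H₁) n n * (σ n : ℂ)) := by
        rw [Matrix.smul_mul]
        simp [Matrix.mul_diagonal]
      have e2 : ((H₁ * (Matrix.diagonal (fun k => (σ k : ℂ)) * H₁)) n n).re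
          = ∑ a : Fin N, σ a * Complex.normSq (H₁ n a) := by
        rw [← Matrix.mul_assoc]
        rw [Matrix.mul_apply]
        rw [Complex.re_sum]
        refine Finset.sum_congr rfl fun a _ => ?_
        rw [Matrix.mul_diagonal]
        rw [← hH₁.apply a n]
        have : H₁ n a * (σ a : ℂ) * star (H₁ n a)
            = (σ a : ℂ) * (Complex.normSq (H₁ n a) : ℂ) := by
          rw [mul_comm (H₁ n a) ((σ a : ℂ)), mul_assoc]
          rw [Complex.star_def, Complex.mul_conj]
        rw [this]
        simp
      rw [e1, e3]
      simp only [Complex.add_re, Complex.neg_re, e2]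
      have hRsum : ∑ j : Fin N, R n j * σ j =
          (∑ j : Fin N, 2 * Complex.normSq (H₁ n j) * σ j)
            + (-2 * ((H₁ * H₁) n n).re * σ n) := by
        have hkey : ∀ j : Fin N, R n j * σ j =
            2 * Complex.normSq (H₁ n j) * σ j
              + (if j = n then (-2 * ((H₁ * H₁) n n).re) * σ n else 0) := by
          intro j
          rcases eq_or_ne j n with rfl | hj
          · rw [hR]
            simp only [if_pos rfl, Complex.sq_norm, if_true]
            ring
          · rw [hR, if_neg (Ne.symm hj), if_neg hj, Complex.sq_norm]
            ring
        rw [Finset.sum_congr rfl fun j _ => hkey j, Finset.sum_add_distrib,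
          Finset.sum_ite_eq' Finset.univ n (fun _ => (-2 * ((H₁ * H₁) n n).re) * σ n)]
        simp
      rw [hRsum]
      rw [Complex.re_ofReal_mul, Complex.re_mul_ofReal]
      have hs : ∑ j : Fin N, 2 * Complex.normSq (H₁ n j) * σ j
          = (∑ a : Fin N, σ a * Complex.normSq (H₁ n a))
            + ∑ a : Fin N, σ a * Complex.normSq (H₁ n a) := by
        rw [← Finset.sum_add_distrib]
        exact Finset.sum_congr rfl fun a _ => by ring
      rw [hs]
      ring
    rw [← hval]
    exact h
end
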